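/- arXiv:2004.01995 — 2 statements merged into one kernel-verified Lean document; each statement's English description precedes it below -/
import Mathlib

section
/- Let (a_n) and (b_n) be sequences of complex numbers and let c < d be real numbers. If for every real x with c < x < d the sequence a_n * cos(n x) + b_n * sin(n x) tends to 0 as n → ∞, then a_n → 0 and b_n → 0. -/
/-!
Splitting into real and imaginary parts, we may take `a_n, b_n` real. Writing
`a_n cos(nx) + b_n sin(nx) = r_n cos(nx - θ_n)` with `r_n = |(a_n, b_n)|`, it suffices to show
`r_n → 0`. Otherwise `r_n ≥ ε` for infinitely many `n`, and along those `n` we get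
`cos(nx - θ_n) → 0` on `(c, d)`. By dominated convergence `∫_c^d cos²(nx - θ_n) dx → 0`,
whereas this integral equals `(d - c)/2 + O(1/n)`.
-/

open Filter Topology Real Set MeasureTheory

theorem integral_cos_mul_sub_sq {n : ℝ} (hn : n ≠ 0) (θ c d : ℝ) :
    ∫ x in c..d, cos (n * x - θ) ^ 2
      = (d - c) / 2 + (sin (2 * n * d - 2 * θ) - sin (2 * n * c - 2 * θ)) / (4 * n) := by
  have h2n : 2 * n ≠ 0 := mul_ne_zero two_ne_zero hn
  have hsq : ∀ x, cos (n * x - θ) ^ 2 = 1 / 2 + cos (2 * n * x - 2 * θ) / 2 := fun x => by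
    rw [cos_sq]; ring_nf
  simp_rw [hsq]
  rw [intervalIntegral.integral_add intervalIntegrable_const
      (Continuous.intervalIntegrable (by fun_prop) _ _),
    intervalIntegral.integral_const, intervalIntegral.integral_div,
    intervalIntegral.integral_comp_mul_sub cos h2n, integral_cos, smul_eq_mul, smul_eq_mul]
  field_simp
  ring

theorem tendsto_integral_cos_mul_sub_sq {ι : Type*} {l : Filter ι} {ℓ : ι → ℝ}
    (hℓ : Tendsto ℓ l atTop) (θ : ι → ℝ) (c d : ℝ) :
    Tendsto (fun i => ∫ x in c..d, cos (ℓ i * x - θ i) ^ 2) l (𝓝 ((d - c) / 2)) := by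
  have hbound : ∀ᶠ i in l,
      |(∫ x in c..d, cos (ℓ i * x - θ i) ^ 2) - (d - c) / 2| ≤ (ℓ i)⁻¹ / 2 := by
    filter_upwards [hℓ.eventually_gt_atTop 0] with i hi
    rw [integral_cos_mul_sub_sq hi.ne', add_sub_cancel_left, abs_div,
      abs_of_pos (by positivity : 0 < 4 * ℓ i), div_le_iff₀ (by positivity)]
    calc |sin (2 * ℓ i * d - 2 * θ i) - sin (2 * ℓ i * c - 2 * θ i)|
        ≤ |sin (2 * ℓ i * d - 2 * θ i)| + |sin (2 * ℓ i * c - 2 * θ i)| := abs_sub _ _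
      _ ≤ 1 + 1 := add_le_add (abs_sin_le_one _) (abs_sin_le_one _)
      _ = (ℓ i)⁻¹ / 2 * (4 * ℓ i) := by field_simp; norm_num
  have hsmall : Tendsto (fun i => (ℓ i)⁻¹ / 2) l (𝓝 0) := by
    simpa using (tendsto_inv_atTop_zero.comp hℓ).div_const 2
  rw [tendsto_iff_norm_sub_tendsto_zero]
  exact squeeze_zero' (Eventually.of_forall fun _ => norm_nonneg _) hbound hsmall

theorem not_forall_tendsto_cos_mul_sub {ι : Type*} {l : Filter ι} [l.NeBot]
    [l.IsCountablyGenerated] {ℓ : ι → ℝ} (hℓ : Tendsto ℓ l atTop) (θ : ι → ℝ) {c d : ℝ}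
    (hcd : c < d) : ¬ ∀ x ∈ Ioo c d, Tendsto (fun i => cos (ℓ i * x - θ i)) l (𝓝 0) := by
  intro h
  have hzero : Tendsto (fun i => ∫ x in c..d, cos (ℓ i * x - θ i) ^ 2) l (𝓝 0) := by
    simpa using intervalIntegral.tendsto_integral_filter_of_dominated_convergence
      (f := fun _ => 0) (fun _ => 1)
      (Eventually.of_forall fun i =>
        (by fun_prop : Continuous fun x => cos (ℓ i * x - θ i) ^ 2).aestronglyMeasurable)
      (Eventually.of_forall fun i => Eventually.of_forall fun x _ => by
        simpa using pow_le_one₀ (abs_nonneg _) (abs_cos_le_one (ℓ i * x - θ i)) (n := 2))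
      intervalIntegrable_const
      (by
        filter_upwards [Ioo_ae_eq_Ioc (a := c) (b := d) (μ := volume)] with x hx hxI
        rw [uIoc_of_le hcd.le] at hxI
        simpa using (h x (hx.mpr hxI)).pow 2)
  have := tendsto_nhds_unique hzero (tendsto_integral_cos_mul_sub_sq hℓ θ c d)
  linarith

theorem re_mul_cos_add_im_mul_sin (z : ℂ) (t : ℝ) :
    z.re * cos t + z.im * sin t = ‖z‖ * cos (t - z.arg) := by
  rw [cos_sub, ← Complex.norm_mul_cos_arg, ← Complex.norm_mul_sin_arg]
  ring

theorem Complex.tendsto_of_tendsto_re_im {ι : Type*} {l : Filter ι} {f : ι → ℂ} {z : ℂ}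
    (hre : Tendsto (fun i => (f i).re) l (𝓝 z.re))
    (him : Tendsto (fun i => (f i).im) l (𝓝 z.im)) :
    Tendsto f l (𝓝 z) := by
  simpa only [re_add_im] using hre.ofReal.add (him.ofReal.mul_const I)

theorem tendsto_zero_of_forall_tendsto_mul_cos_add_mul_sin {a b : ℕ → ℝ} {c d : ℝ}
    (hcd : c < d)
    (h : ∀ x ∈ Ioo c d,
      Tendsto (fun n : ℕ => a n * cos (n * x) + b n * sin (n * x)) atTop (𝓝 0)) :
    Tendsto a atTop (𝓝 0) ∧ Tendsto b atTop (𝓝 0) := by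
  set z : ℕ → ℂ := fun n => ⟨a n, b n⟩
  suffices hz : Tendsto (fun n => ‖z n‖) atTop (𝓝 0) from
    ⟨squeeze_zero_norm (fun n => Complex.abs_re_le_norm (z n)) hz,
      squeeze_zero_norm (fun n => Complex.abs_im_le_norm (z n)) hz⟩
  rw [Metric.tendsto_nhds]
  intro ε hε
  by_contra hfreq
  rw [not_eventually] at hfreq
  set l := atTop ⊓ 𝓟 {n | ¬ dist ‖z n‖ 0 < ε}
  have : l.NeBot := frequently_iff_neBot.mp hfreq
  have hlarge : ∀ᶠ n in l, ε ≤ ‖z n‖ :=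
    mem_inf_of_right fun n hn => by simpa using hn
  refine not_forall_tendsto_cos_mul_sub (l := l)
    (tendsto_natCast_atTop_atTop.mono_left inf_le_left) (fun n => (z n).arg) hcd fun x hx => ?_
  have hsmall :
      Tendsto (fun n : ℕ => ‖a n * cos (n * x) + b n * sin (n * x)‖ / ε) l (𝓝 0) := by
    simpa using (((h x hx).mono_left inf_le_left).norm.div_const ε)
  refine squeeze_zero_norm' ?_ hsmall
  filter_upwards [hlarge] with n hn
  rw [le_div_iff₀ hε, re_mul_cos_add_im_mul_sin (z n), norm_mul, norm_norm, mul_comm]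
  exact mul_le_mul_of_nonneg_right hn (norm_nonneg _)

theorem cantor_trig (a b : ℕ → ℂ) (c d : ℝ) (hcd : c < d)
    (h : ∀ x : ℝ, c < x → x < d →
      Tendsto (fun n : ℕ => a n * (Real.cos (n * x) : ℂ) + b n * (Real.sin (n * x) : ℂ))
        atTop (𝓝 0)) :
    Tendsto a atTop (𝓝 0) ∧ Tendsto b atTop (𝓝 0) := by
  obtain ⟨hare, hbre⟩ := tendsto_zero_of_forall_tendsto_mul_cos_add_mul_sin
    (a := fun n => (a n).re) (b := fun n => (b n).re) hcd fun x hx => by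
      simpa only [Function.comp_def, Complex.add_re, Complex.re_mul_ofReal, Complex.zero_re] using
        (Complex.continuous_re.tendsto 0).comp (h x hx.1 hx.2)
  obtain ⟨haim, hbim⟩ := tendsto_zero_of_forall_tendsto_mul_cos_add_mul_sin
    (a := fun n => (a n).im) (b := fun n => (b n).im) hcd fun x hx => by
      simpa only [Function.comp_def, Complex.add_im, Complex.im_mul_ofReal, Complex.zero_im] using
        (Complex.continuous_im.tendsto 0).comp (h x hx.1 hx.2)
  exact ⟨Complex.tendsto_of_tendsto_re_im hare haim, Complex.tendsto_of_tendsto_re_im hbre hbim⟩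
end

section
/- Let δ > 0 and let (B_n) be a bounded sequence of complex numbers such that for every real t with 0 < t < δ the sequence B_n * sin(n t) tends to 0 as n → ∞. Then B_n → 0. -/
/-!
Integrate `‖B n‖ sin² (n t)` over `0 < t ≤ δ / 2` (halving `δ` keeps the endpoint inside `(0, δ)`).
Since `sin² ≤ |sin|`, the integrand is at most `‖B n sin (n t)‖ → 0`, and it is bounded by `M`, so by
dominated convergence the integrals tend to `0`. But the integral is `‖B n‖` times
`∫₀^{δ/2} sin² (n t) dt → δ / 4 > 0`, forcing `‖B n‖ → 0`.
-/

open Filter Topology MeasureTheory intervalIntegral Real Set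

theorem integral_sin_mul_sq {c : ℝ} (hc : c ≠ 0) (a : ℝ) :
    ∫ t in 0..a, sin (c * t) ^ 2 = a / 2 - sin (c * a) * cos (c * a) / (2 * c) := by
  rw [integral_comp_mul_left (fun u => sin u ^ 2) hc, mul_zero, integral_sin_sq]
  simp only [sin_zero, cos_zero, smul_eq_mul]
  field_simp
  ring

theorem tendsto_integral_sin_nat_mul_sq (a : ℝ) :
    Tendsto (fun n : ℕ => ∫ t in 0..a, sin (n * t) ^ 2) atTop (𝓝 (a / 2)) := by
  have hremainder : Tendsto (fun n : ℕ => sin (n * a) * cos (n * a) / (2 * n)) atTop (𝓝 0) := by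
    refine squeeze_zero_norm (a := fun n : ℕ => 1 / (2 * n)) (fun n => ?_) ?_
    · simp only [norm_div, norm_mul, Real.norm_eq_abs, Nat.abs_cast, abs_two]
      gcongr
      exact mul_le_one₀ (abs_sin_le_one _) (abs_nonneg _) (abs_cos_le_one _)
    · simpa [mul_comm] using tendsto_inv_atTop_nhds_zero_nat.const_mul (2⁻¹ : ℝ)
  have hformula : ∀ᶠ n : ℕ in atTop,
      a / 2 - sin (n * a) * cos (n * a) / (2 * n) = ∫ t in 0..a, sin (n * t) ^ 2 :=
    eventually_atTop.2 ⟨1, fun n hn =>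
      (integral_sin_mul_sq (Nat.cast_ne_zero.2 (by omega)) a).symm⟩
  simpa using (tendsto_const_nhds.sub hremainder).congr' hformula

theorem norm_mul_sq_le_norm_mul_ofReal {r : ℝ} (hr : |r| ≤ 1) (b : ℂ) :
    ‖b‖ * r ^ 2 ≤ ‖b * (r : ℂ)‖ := by
  rw [norm_mul, Complex.norm_real, Real.norm_eq_abs, ← sq_abs]
  gcongr
  exact pow_le_of_le_one (abs_nonneg r) hr two_ne_zero

theorem tendsto_norm_mul_sin_sq_of_tendsto {B : ℕ → ℂ} {t : ℝ}
    (h : Tendsto (fun n : ℕ => B n * (sin (n * t) : ℂ)) atTop (𝓝 0)) :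
    Tendsto (fun n : ℕ => ‖B n‖ * sin (n * t) ^ 2) atTop (𝓝 0) :=
  squeeze_zero (fun n => by positivity)
    (fun n => norm_mul_sq_le_norm_mul_ofReal (abs_sin_le_one _) (B n))
    (by simpa using h.norm)

theorem tendsto_integral_norm_mul_sin_sq {B : ℕ → ℂ} {M a : ℝ} (hM : ∀ n, ‖B n‖ ≤ M)
    (h : ∀ t ∈ uIoc 0 a, Tendsto (fun n : ℕ => B n * (sin (n * t) : ℂ)) atTop (𝓝 0)) :
    Tendsto (fun n : ℕ => ∫ t in 0..a, ‖B n‖ * sin (n * t) ^ 2) atTop (𝓝 0) := by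
  have hbound (n : ℕ) (t : ℝ) : ‖‖B n‖ * sin (n * t) ^ 2‖ ≤ M := by
    rw [Real.norm_of_nonneg (by positivity)]
    calc ‖B n‖ * sin (n * t) ^ 2 ≤ ‖B n‖ * 1 := by gcongr; exact sin_sq_le_one _
      _ ≤ M := by simpa using hM n
  simpa using tendsto_integral_filter_of_dominated_convergence (fun _ => M)
    (Eventually.of_forall fun n => (by fun_prop : Continuous _).aestronglyMeasurable)
    (Eventually.of_forall fun n => ae_of_all _ fun t _ => hbound n t)
    intervalIntegrable_const
    (ae_of_all _ fun t ht => tendsto_norm_mul_sin_sq_of_tendsto (h t ht))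

theorem lemmaA (δ : ℝ) (hδ : 0 < δ) (B : ℕ → ℂ) (M : ℝ) (hM : ∀ n, ‖B n‖ ≤ M)
    (h : ∀ t : ℝ, 0 < t → t < δ →
      Tendsto (fun n : ℕ => B n * (Real.sin (n * t) : ℂ)) atTop (𝓝 0)) :
    Tendsto B atTop (𝓝 0) := by
  set I : ℕ → ℝ := fun n => ∫ t in 0..δ / 2, sin (n * t) ^ 2
  have hI : Tendsto I atTop (𝓝 (δ / 2 / 2)) := tendsto_integral_sin_nat_mul_sq (δ / 2)
  have hBI : Tendsto (fun n => ‖B n‖ * I n) atTop (𝓝 0) := by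
    simp only [I, ← intervalIntegral.integral_const_mul]
    refine tendsto_integral_norm_mul_sin_sq hM fun t ht => ?_
    rw [uIoc_of_le (half_pos hδ).le] at ht
    exact h t ht.1 (by linarith [ht.2])
  have hlim_ne : δ / 2 / 2 ≠ 0 := by positivity
  have hI_ne : ∀ᶠ n in atTop, I n ≠ 0 := hI.eventually_ne hlim_ne
  rw [tendsto_zero_iff_norm_tendsto_zero]
  simpa using (hBI.div hI hlim_ne).congr' (hI_ne.mono fun n hn => mul_div_cancel_right₀ _ hn)
end
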